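/- arXiv:1711.08827 — 8 statements merged into one kernel-verified Lean document; each statement's English description precedes it below -/
import Mathlib

section
/- Let μ be a Borel probability measure on ℝ with mean 0 and variance 1, and suppose μ((-1-ε, -1+ε) ∪ (1-ε, 1+ε)) ≥ 1 - ε for some ε ∈ (0,1). Then the Lévy distance between μ and the symmetric Bernoulli distribution b = (1/2)δ_{-1} + (1/2)δ_1 is at most (7/2)ε. -/
open MeasureTheory ProbabilityTheory Set
open scoped ENNReal

/-- The Lévy distance between two probability measures on ℝ, defined via their
cumulative distribution functions. -/
noncomputable def levyDist (μ ν : Measure ℝ) : ℝ :=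
  sInf {ε : ℝ | 0 < ε ∧ ∀ x : ℝ,
    cdf μ (x - ε) - ε ≤ cdf ν x ∧ cdf ν x ≤ cdf μ (x + ε) + ε}

/-- The symmetric Bernoulli distribution `b = (1/2)δ₋₁ + (1/2)δ₁`. -/
noncomputable def bern : Measure ℝ :=
  (2 : ℝ≥0∞)⁻¹ • Measure.dirac (-1) + (2 : ℝ≥0∞)⁻¹ • Measure.dirac 1

/-! The windows `A = (-1-ε, -1+ε)` and `B = (1-ε, 1+ε)` each carry mass about `1/2`. Indeed
`(x² - x)/2` has mean `1/2` under `μ`, is at least `1 - 3ε/2` on `A`, at least `-3ε/2` on `B`,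
and at least `-1/8` everywhere, so `μ A ≤ 1/2 + 3ε/2 + μ(A ∪ B)ᶜ/8 ≤ 1/2 + 13ε/8`; symmetrically
for `B` with `(x² + x)/2`. Together with `μ (A ∪ B) ≥ 1 - ε` this gives `μ A, μ B ≥ 1/2 - 21ε/8`,
and then the cdf of `μ`, shifted by `7ε/2`, stays within `7ε/2` of the three-step cdf of `b`. -/

instance : IsProbabilityMeasure bern :=
  ⟨by simp [bern, ENNReal.inv_two_add_inv_two]⟩

lemma cdf_bern (x : ℝ) :
    cdf bern x = if x < -1 then 0 else if x < 1 then 1 / 2 else 1 := by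
  rw [cdf_eq_real]
  simp only [bern, measureReal_def, Measure.add_apply, Measure.smul_apply, smul_eq_mul,
    Measure.dirac_apply' _ measurableSet_Iic]
  split_ifs with h₁ h₂
  · simp [h₁, h₁.trans (by norm_num : (-1 : ℝ) < 1)]
  · simp [h₂, not_lt.1 h₁]
  · simp [not_lt.1 h₁, not_lt.1 h₂, ENNReal.inv_two_add_inv_two]

lemma levyDist_le {μ ν : Measure ℝ} {δ : ℝ} (hδ : 0 < δ)
    (h : ∀ x, cdf μ (x - δ) - δ ≤ cdf ν x ∧ cdf ν x ≤ cdf μ (x + δ) + δ) :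
    levyDist μ ν ≤ δ :=
  csInf_le ⟨0, fun _ hε ↦ hε.1.le⟩ ⟨hδ, h⟩

lemma levyDist_bern_le (μ : Measure ℝ) [IsProbabilityMeasure μ] {η δ : ℝ}
    (hδ : 0 < δ) (hηδ : η ≤ δ)
    (hA : 1 / 2 - δ ≤ μ.real (Ioo (-1 - η) (-1 + η)))
    (hB : 1 / 2 - δ ≤ μ.real (Ioo (1 - η) (1 + η)))
    (hAB : 1 - δ ≤ μ.real (Ioo (-1 - η) (-1 + η) ∪ Ioo (1 - η) (1 + η))) :
    levyDist μ bern ≤ δ := by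
  have cdf_le {t : ℝ} {s : Set ℝ} (hs : MeasurableSet s) (hts : Iic t ⊆ sᶜ) :
      cdf μ t ≤ 1 - μ.real s := by
    rw [cdf_eq_real, ← probReal_compl_eq_one_sub hs]
    exact measureReal_mono hts
  have le_cdf {t : ℝ} {s : Set ℝ} (hst : s ⊆ Iic t) : μ.real s ≤ cdf μ t := by
    rw [cdf_eq_real]
    exact measureReal_mono hst
  have below_A {t : ℝ} (ht : t ≤ -1 - η) : cdf μ t ≤ δ := by
    have := cdf_le (measurableSet_Ioo.union measurableSet_Ioo) (t := t)
      (s := Ioo (-1 - η) (-1 + η) ∪ Ioo (1 - η) (1 + η)) fun y hy ↦ by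
        simp only [mem_Iic, mem_compl_iff, mem_union, mem_Ioo] at hy ⊢; grind
    linarith
  have below_B {t : ℝ} (ht : t ≤ 1 - η) : cdf μ t ≤ 1 / 2 + δ := by
    have := cdf_le measurableSet_Ioo (t := t) (s := Ioo (1 - η) (1 + η)) fun y hy ↦ by
      simp only [mem_Iic, mem_compl_iff, mem_Ioo] at hy ⊢; grind
    linarith
  have above_A {t : ℝ} (ht : -1 + η ≤ t) : 1 / 2 - δ ≤ cdf μ t :=
    hA.trans <| le_cdf fun y hy ↦ by simp only [mem_Iic, mem_Ioo] at hy ⊢; grind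
  have above_B {t : ℝ} (ht : 1 + η ≤ t) : 1 - δ ≤ cdf μ t :=
    hAB.trans <| le_cdf fun y hy ↦ by simp only [mem_Iic, mem_union, mem_Ioo] at hy ⊢; grind
  refine levyDist_le hδ fun x ↦ ?_
  have := cdf_nonneg μ (x + δ)
  have := cdf_le_one μ (x - δ)
  rw [cdf_bern]
  split_ifs with hx₁ hx₂
  · have := below_A (t := x - δ) (by linarith)
    constructor <;> linarith
  · have := below_B (t := x - δ) (by linarith)
    have := above_A (t := x + δ) (by linarith)
    constructor <;> linarith
  · have := above_B (t := x + δ) (by linarith)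
    constructor <;> linarith

lemma indicator_Ioo_le_quadratic {σ ε : ℝ} (hσ : σ = 1 ∨ σ = -1) (hε : 0 ≤ ε) (x : ℝ) :
    (Ioo (σ - ε) (σ + ε)).indicator 1 x ≤ (x ^ 2 + σ * x) / 2 + 3 * ε / 2 +
      (Ioo (-1 - ε) (-1 + ε) ∪ Ioo (1 - ε) (1 + ε))ᶜ.indicator (fun _ ↦ 1 / 8) x := by
  set C := (Ioo (-1 - ε) (-1 + ε) ∪ Ioo (1 - ε) (1 + ε))ᶜ
  have q_ge : -1 / 8 ≤ (x ^ 2 + σ * x) / 2 := by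
    rcases hσ with rfl | rfl <;> nlinarith [sq_nonneg (x + 1 / 2), sq_nonneg (x - 1 / 2)]
  have q_near : x ∉ C → 0 ≤ (x ^ 2 + σ * x) / 2 + 3 * ε / 2 := by
    simp only [C, mem_compl_iff, not_not]
    rintro (⟨h₁, h₂⟩ | ⟨h₁, h₂⟩) <;> rcases hσ with rfl | rfl <;>
      nlinarith [sq_nonneg (x + 1), sq_nonneg (x - 1)]
  have q_at : x ∈ Ioo (σ - ε) (σ + ε) → 1 ≤ (x ^ 2 + σ * x) / 2 + 3 * ε / 2 := by
    rintro ⟨h₁, h₂⟩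
    rcases hσ with rfl | rfl <;> nlinarith [sq_nonneg (x + 1 / 2), sq_nonneg (x - 1 / 2)]
  by_cases hC : x ∈ C
  · have : x ∉ Ioo (σ - ε) (σ + ε) := fun hx ↦ hC (by rcases hσ with rfl | rfl <;> simp [hx])
    rw [indicator_of_notMem this, indicator_of_mem hC]
    linarith
  · rw [indicator_of_notMem hC, add_zero, indicator_apply]
    split_ifs with hx
    exacts [q_at hx, q_near hC]

lemma measureReal_Ioo_le_of_moments (μ : Measure ℝ) [IsProbabilityMeasure μ]
    (hi1 : Integrable (fun x ↦ x) μ) (hi2 : Integrable (fun x ↦ x ^ 2) μ)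
    (h1 : ∫ x, x ∂μ = 0) (h2 : ∫ x, x ^ 2 ∂μ = 1)
    {σ ε : ℝ} (hσ : σ = 1 ∨ σ = -1) (hε : 0 ≤ ε) :
    μ.real (Ioo (σ - ε) (σ + ε)) ≤
      1 / 2 + 3 * ε / 2 + μ.real (Ioo (-1 - ε) (-1 + ε) ∪ Ioo (1 - ε) (1 + ε))ᶜ / 8 := by
  have hC : MeasurableSet (Ioo (-1 - ε) (-1 + ε) ∪ Ioo (1 - ε) (1 + ε))ᶜ :=
    (measurableSet_Ioo.union measurableSet_Ioo).compl
  have hq : Integrable (fun x ↦ (x ^ 2 + σ * x) / 2) μ := (hi2.add (hi1.const_mul σ)).div_const 2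
  have hq' : Integrable (fun x ↦ (x ^ 2 + σ * x) / 2 + 3 * ε / 2) μ := hq.add (integrable_const _)
  have hind : Integrable (fun x ↦
      (Ioo (-1 - ε) (-1 + ε) ∪ Ioo (1 - ε) (1 + ε))ᶜ.indicator (fun _ ↦ (1 : ℝ) / 8) x) μ :=
    (integrable_const _).indicator hC
  calc μ.real (Ioo (σ - ε) (σ + ε))
      = ∫ x, (Ioo (σ - ε) (σ + ε)).indicator 1 x ∂μ :=
        (integral_indicator_one measurableSet_Ioo).symm
    _ ≤ ∫ x, (x ^ 2 + σ * x) / 2 + 3 * ε / 2 +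
          (Ioo (-1 - ε) (-1 + ε) ∪ Ioo (1 - ε) (1 + ε))ᶜ.indicator (fun _ ↦ 1 / 8) x ∂μ :=
        integral_mono ((integrable_const 1).indicator measurableSet_Ioo) (hq'.add hind)
          (indicator_Ioo_le_quadratic hσ hε)
    _ = _ := by
        rw [integral_add hq' hind, integral_add hq (integrable_const _), integral_div,
          integral_add hi2 (hi1.const_mul σ), integral_const_mul, h1, h2,
          integral_indicator_const _ hC]
        simp
        ring

theorem levy_dist_le_of_concentration
    (μ : Measure ℝ) [IsProbabilityMeasure μ]
    (hi1 : Integrable (fun x => x) μ) (hi2 : Integrable (fun x => x ^ 2) μ)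
    (h1 : ∫ x, x ∂μ = 0) (h2 : ∫ x, x ^ 2 ∂μ = 1)
    (ε : ℝ) (hε : ε ∈ Ioo (0 : ℝ) 1)
    (hconc : (μ (Ioo (-1 - ε) (-1 + ε) ∪ Ioo (1 - ε) (1 + ε))).toReal ≥ 1 - ε) :
    levyDist μ bern ≤ (7 / 2) * ε := by
  obtain ⟨hε₀, -⟩ := hε
  have hconc : 1 - ε ≤ μ.real (Ioo (-1 - ε) (-1 + ε) ∪ Ioo (1 - ε) (1 + ε)) := hconc
  have hC : μ.real (Ioo (-1 - ε) (-1 + ε) ∪ Ioo (1 - ε) (1 + ε))ᶜ ≤ ε := by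
    rw [probReal_compl_eq_one_sub (measurableSet_Ioo.union measurableSet_Ioo)]
    linarith
  have hA := measureReal_Ioo_le_of_moments μ hi1 hi2 h1 h2 (Or.inr rfl) hε₀.le
  have hB := measureReal_Ioo_le_of_moments μ hi1 hi2 h1 h2 (Or.inl rfl) hε₀.le
  have hAB := measureReal_union_le (μ := μ) (Ioo (-1 - ε) (-1 + ε)) (Ioo (1 - ε) (1 + ε))
  exact levyDist_bern_le μ (η := ε) (by linarith) (by linarith) (by linarith) (by linarith)
    (by linarith)
end

section
/- Let μ be a Borel probability measure on ℝ with mean 0, variance 1, and finite fourth moment m_4(μ). Then the Lévy distance between μ and the symmetric Bernoulli distribution b = (1/2)δ_{-1} + (1/2)δ_1 satisfies L(μ, b) ≤ (7/2)·(m_4(μ) - 1)^{1/3}. -/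
/-! Put `M = ∫ (x² - 1)² dμ = m₄(μ) - 1`. Because `(x² - 1)² = (x - 1)²(x + 1)²`, the weight
`(x² - 1)² / ε²` is large wherever `x` is `ε`-far from `±1`, so the indicator of each half-line occurring
in the Lévy condition against `bern` is squeezed, up to `± (x² - 1)² / ε²`, by a constant or by the
affine function `(1 - x) / 2 ± ε / 2`. As `μ` is centred, `(1 - x) / 2` integrates to `1 / 2`;
integrating gives the four cdf estimates with error `ε / 2 + M / ε²`, which is at most `ε` once
`M ≤ ε³ / 2`. -/

open MeasureTheory ProbabilityTheory Set
open scoped ENNReal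

instance inst_s4 : IsProbabilityMeasure bern := by
  constructor
  simpa [bern] using ENNReal.inv_two_add_inv_two

lemma levyDist_le_of_forall_lt {μ ν : Measure ℝ} {δ : ℝ} (hδ : 0 ≤ δ)
    (h : ∀ ε, δ < ε → ∀ x, cdf μ (x - ε) - ε ≤ cdf ν x ∧ cdf ν x ≤ cdf μ (x + ε) + ε) :
    levyDist μ ν ≤ δ :=
  le_of_forall_gt_imp_ge_of_dense fun ε hε =>
    csInf_le ⟨0, fun _ hε' => hε'.1.le⟩ ⟨hδ.trans_lt hε, h ε hε⟩

lemma levy_condition_bern {μ : Measure ℝ} [IsProbabilityMeasure μ] {ε : ℝ}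
    (h_left : cdf μ (-1 - ε) ≤ ε) (h_below_one : ∀ y < 1 - ε, cdf μ y ≤ 1 / 2 + ε)
    (h_neg_one : 1 / 2 - ε ≤ cdf μ (-1 + ε)) (h_right : 1 - ε ≤ cdf μ (1 + ε)) (x : ℝ) :
    cdf μ (x - ε) - ε ≤ cdf bern x ∧ cdf bern x ≤ cdf μ (x + ε) + ε := by
  have hε : 0 ≤ ε := (cdf_nonneg μ _).trans h_left
  rw [cdf_bern]
  split_ifs
  · exact ⟨by linarith [monotone_cdf μ (by linarith : x - ε ≤ -1 - ε)],
      by linarith [cdf_nonneg μ (x + ε)]⟩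
  · exact ⟨by linarith [h_below_one (x - ε) (by linarith)],
      by linarith [monotone_cdf μ (by linarith : -1 + ε ≤ x + ε)]⟩
  · exact ⟨by linarith [cdf_le_one μ (x - ε)],
      by linarith [monotone_cdf μ (by linarith : 1 + ε ≤ x + ε)]⟩

section IndicatorBounds

variable {α : Type*} [MeasurableSpace α] {μ : Measure α} [IsFiniteMeasure μ] {S : Set α} {f : α → ℝ}

lemma measureReal_le_integral_of_indicator_le (hS : MeasurableSet S) (hf : Integrable f μ)
    (h : ∀ t, S.indicator 1 t ≤ f t) : μ.real S ≤ ∫ t, f t ∂μ := by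
  rw [← integral_indicator_one hS]
  exact integral_mono ((integrable_const 1).indicator hS) hf h

lemma integral_le_measureReal_of_le_indicator (hS : MeasurableSet S) (hf : Integrable f μ)
    (h : ∀ t, f t ≤ S.indicator 1 t) : ∫ t, f t ∂μ ≤ μ.real S := by
  rw [← integral_indicator_one hS]
  exact integral_mono hf ((integrable_const 1).indicator hS) h

end IndicatorBounds

section Pointwise

variable {ε t : ℝ}

lemma mul_sq_add_one_le_sq_sub_one_sq (hε : 0 ≤ ε) (h : ε ≤ |t - 1|) :
    ε ^ 2 * (t + 1) ^ 2 ≤ (t ^ 2 - 1) ^ 2 := by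
  have : ε ^ 2 ≤ (t - 1) ^ 2 := by simpa only [sq_abs] using pow_le_pow_left₀ hε h 2
  nlinarith [sq_nonneg (t + 1)]

lemma mul_sq_sub_one_le_sq_sub_one_sq (hε : 0 ≤ ε) (h : ε ≤ |t + 1|) :
    ε ^ 2 * (t - 1) ^ 2 ≤ (t ^ 2 - 1) ^ 2 := by
  have : ε ^ 2 ≤ (t + 1) ^ 2 := by simpa only [sq_abs] using pow_le_pow_left₀ hε h 2
  nlinarith [sq_nonneg (t - 1)]

end Pointwise

section CdfEstimates

variable {μ : Measure ℝ} [IsProbabilityMeasure μ] {ε : ℝ}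

lemma cdf_neg_one_sub_le (hε : 0 < ε) (hg : Integrable (fun t => (t ^ 2 - 1) ^ 2) μ) :
    cdf μ (-1 - ε) ≤ (∫ t, (t ^ 2 - 1) ^ 2 ∂μ) / ε ^ 2 := by
  rw [cdf_eq_real, ← integral_div]
  refine measureReal_le_integral_of_indicator_le measurableSet_Iic (hg.div_const _) fun t => ?_
  rw [le_div_iff₀ (by positivity)]
  by_cases ht : t ≤ -1 - ε
  · have := mul_sq_sub_one_le_sq_sub_one_sq hε.le (by rw [abs_of_neg (by linarith)]; linarith)
    simp only [indicator_of_mem (show t ∈ Iic (-1 - ε) from ht), Pi.one_apply]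
    nlinarith
  · simp only [indicator_of_notMem (show t ∉ Iic (-1 - ε) from ht), zero_mul]
    positivity

lemma one_sub_le_cdf_one_add (hε : 0 < ε) (hg : Integrable (fun t => (t ^ 2 - 1) ^ 2) μ) :
    1 - (∫ t, (t ^ 2 - 1) ^ 2 ∂μ) / ε ^ 2 ≤ cdf μ (1 + ε) := by
  rw [cdf_eq_real]
  calc 1 - (∫ t, (t ^ 2 - 1) ^ 2 ∂μ) / ε ^ 2 = ∫ t, (1 - (t ^ 2 - 1) ^ 2 / ε ^ 2) ∂μ := by
        rw [integral_sub (integrable_const 1) (hg.div_const _), integral_div]; simp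
    _ ≤ μ.real (Iic (1 + ε)) := integral_le_measureReal_of_le_indicator measurableSet_Iic
        ((integrable_const 1).sub (hg.div_const _)) fun t => ?_
  by_cases ht : t ≤ 1 + ε
  · simp only [indicator_of_mem (show t ∈ Iic (1 + ε) from ht), Pi.one_apply]
    linarith [show 0 ≤ (t ^ 2 - 1) ^ 2 / ε ^ 2 by positivity]
  · have := mul_sq_add_one_le_sq_sub_one_sq hε.le (by rw [abs_of_pos (by linarith)]; linarith)
    simp only [indicator_of_notMem (show t ∉ Iic (1 + ε) from ht)]
    rw [sub_nonpos, le_div_iff₀ (by positivity)]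
    nlinarith

lemma integral_one_sub_div_two (hx : Integrable (fun t => t) μ) (h1 : ∫ t, t ∂μ = 0) :
    ∫ t, (1 - t) / 2 ∂μ = 1 / 2 := by
  rw [integral_div, integral_sub (integrable_const 1) hx, h1]
  simp

lemma one_half_sub_le_cdf_neg_one_add (hε : 0 < ε) (hx : Integrable (fun t => t) μ)
    (h1 : ∫ t, t ∂μ = 0) (hg : Integrable (fun t => (t ^ 2 - 1) ^ 2) μ) :
    1 / 2 - ε / 2 - (∫ t, (t ^ 2 - 1) ^ 2 ∂μ) / ε ^ 2 ≤ cdf μ (-1 + ε) := by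
  have hhalf : Integrable (fun t => (1 - t) / 2) μ := ((integrable_const 1).sub hx).div_const 2
  have hlin : Integrable (fun t => (1 - t) / 2 - ε / 2) μ := hhalf.sub (integrable_const _)
  rw [cdf_eq_real]
  calc 1 / 2 - ε / 2 - (∫ t, (t ^ 2 - 1) ^ 2 ∂μ) / ε ^ 2
        = ∫ t, ((1 - t) / 2 - ε / 2 - (t ^ 2 - 1) ^ 2 / ε ^ 2) ∂μ := by
        rw [integral_sub hlin (hg.div_const _), integral_sub hhalf (integrable_const _),
          integral_one_sub_div_two hx h1]
        simp [integral_div]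
    _ ≤ μ.real (Iic (-1 + ε)) := integral_le_measureReal_of_le_indicator measurableSet_Iic
        (hlin.sub (hg.div_const _)) fun t => ?_
  have hg₀ : 0 ≤ (t ^ 2 - 1) ^ 2 / ε ^ 2 := by positivity
  by_cases ht : t ≤ -1 + ε
  · simp only [indicator_of_mem (show t ∈ Iic (-1 + ε) from ht), Pi.one_apply]
    by_cases ht' : -1 - ε ≤ t
    · linarith
    · have := mul_sq_sub_one_le_sq_sub_one_sq hε.le (by rw [abs_of_neg (by linarith)]; linarith)
      have : (t - 1) ^ 2 ≤ (t ^ 2 - 1) ^ 2 / ε ^ 2 := by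
        rw [le_div_iff₀ (by positivity)]; linarith
      nlinarith
  · simp only [indicator_of_notMem (show t ∉ Iic (-1 + ε) from ht)]
    by_cases ht' : 1 - ε ≤ t
    · linarith
    · have := mul_sq_add_one_le_sq_sub_one_sq hε.le (by rw [abs_of_neg (by linarith)]; linarith)
      have := mul_sq_sub_one_le_sq_sub_one_sq hε.le (by rw [abs_of_pos (by linarith)]; linarith)
      have : (1 - t) / 2 ≤ (t ^ 2 - 1) ^ 2 / ε ^ 2 := by
        rw [le_div_iff₀ (by positivity)]; nlinarith
      linarith

lemma cdf_le_one_half_add_of_lt (hε : 0 < ε) (hx : Integrable (fun t => t) μ)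
    (h1 : ∫ t, t ∂μ = 0) (hg : Integrable (fun t => (t ^ 2 - 1) ^ 2) μ) {y : ℝ} (hy : y < 1 - ε) :
    cdf μ y ≤ 1 / 2 + ε / 2 + (∫ t, (t ^ 2 - 1) ^ 2 ∂μ) / ε ^ 2 := by
  have hhalf : Integrable (fun t => (1 - t) / 2) μ := ((integrable_const 1).sub hx).div_const 2
  have hlin : Integrable (fun t => (1 - t) / 2 + ε / 2) μ := hhalf.add (integrable_const _)
  rw [cdf_eq_real]
  calc μ.real (Iic y) ≤ μ.real (Iio (1 - ε)) := measureReal_mono (Iic_subset_Iio.2 hy)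
    _ ≤ ∫ t, ((1 - t) / 2 + ε / 2 + (t ^ 2 - 1) ^ 2 / ε ^ 2) ∂μ :=
        measureReal_le_integral_of_indicator_le measurableSet_Iio (hlin.add (hg.div_const _))
          fun t => ?_
    _ = 1 / 2 + ε / 2 + (∫ t, (t ^ 2 - 1) ^ 2 ∂μ) / ε ^ 2 := by
        rw [integral_add hlin (hg.div_const _), integral_add hhalf (integrable_const _),
          integral_one_sub_div_two hx h1]
        simp [integral_div]
  have hg₀ : 0 ≤ (t ^ 2 - 1) ^ 2 / ε ^ 2 := by positivity
  by_cases ht : t < 1 - ε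
  · simp only [indicator_of_mem (show t ∈ Iio (1 - ε) from ht), Pi.one_apply]
    by_cases ht' : t ≤ -1 + ε
    · linarith
    · have := mul_sq_add_one_le_sq_sub_one_sq hε.le (by rw [abs_of_neg (by linarith)]; linarith)
      have := mul_sq_sub_one_le_sq_sub_one_sq hε.le (by rw [abs_of_pos (by linarith)]; linarith)
      have : 1 ≤ (t ^ 2 - 1) ^ 2 / ε ^ 2 := by rw [le_div_iff₀ (by positivity)]; nlinarith
      linarith
  · simp only [indicator_of_notMem (show t ∉ Iio (1 - ε) from ht)]
    by_cases ht' : t ≤ 1 + ε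
    · linarith
    · have := mul_sq_add_one_le_sq_sub_one_sq hε.le (by rw [abs_of_pos (by linarith)]; linarith)
      have : (t - 1) / 2 ≤ (t ^ 2 - 1) ^ 2 / ε ^ 2 := by
        rw [le_div_iff₀ (by positivity)]; nlinarith
      linarith

end CdfEstimates

section FourthMoment

variable {μ : Measure ℝ} (h4 : MemLp (fun x => x) 4 μ)

include h4 in
lemma integrable_pow_four_of_memLp : Integrable (fun x : ℝ => x ^ 4) μ := by
  simpa [Real.norm_eq_abs, Even.pow_abs (by decide : Even 4)] using
    h4.integrable_norm_pow (p := 4) (by norm_num)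

include h4 in
lemma integrable_sq_of_memLp_four [IsFiniteMeasure μ] : Integrable (fun x : ℝ => x ^ 2) μ :=
  (h4.mono_exponent (by norm_num)).integrable_sq

lemma sq_sub_one_sq_eq : (fun x : ℝ => (x ^ 2 - 1) ^ 2) = fun x => x ^ 4 - 2 * x ^ 2 + 1 := by
  funext x; ring

include h4 in
lemma integrable_sq_sub_one_sq [IsFiniteMeasure μ] : Integrable (fun x => (x ^ 2 - 1) ^ 2) μ := by
  rw [sq_sub_one_sq_eq]
  exact ((integrable_pow_four_of_memLp h4).sub
    ((integrable_sq_of_memLp_four h4).const_mul 2)).add (integrable_const 1)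

include h4 in
lemma integral_sq_sub_one_sq [IsProbabilityMeasure μ] (h2 : ∫ x, x ^ 2 ∂μ = 1) :
    ∫ x, (x ^ 2 - 1) ^ 2 ∂μ = (∫ x, x ^ 4 ∂μ) - 1 := by
  have h4' := integrable_pow_four_of_memLp h4
  have h2' := (integrable_sq_of_memLp_four h4).const_mul 2
  have hdiff : Integrable (fun x : ℝ => x ^ 4 - 2 * x ^ 2) μ := h4'.sub h2'
  rw [sq_sub_one_sq_eq, integral_add hdiff (integrable_const 1), integral_sub h4' h2',
    integral_const_mul, h2]
  simp only [mul_one, integral_const, probReal_univ, smul_eq_mul]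
  ring

end FourthMoment

lemma cube_mul_lt_of_mul_rpow_one_third_lt {c M ε : ℝ} (hc : 0 ≤ c) (hM : 0 ≤ M)
    (h : c * M ^ ((1 : ℝ) / 3) < ε) : c ^ 3 * M < ε ^ 3 := by
  have h₀ : 0 ≤ c * M ^ ((1 : ℝ) / 3) := by positivity
  calc c ^ 3 * M = (c * M ^ ((1 : ℝ) / 3)) ^ 3 := by
        rw [mul_pow, ← Real.rpow_natCast (M ^ _), ← Real.rpow_mul hM]
        norm_num
    _ < ε ^ 3 := pow_lt_pow_left₀ h h₀ (by norm_num)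

theorem levy_dist_le_cbrt_fourth_moment
    (μ : Measure ℝ) [IsProbabilityMeasure μ]
    (h4 : MemLp (fun x => x) 4 μ)
    (h1 : ∫ x, x ∂μ = 0) (h2 : ∫ x, x ^ 2 ∂μ = 1) :
    levyDist μ bern ≤ (7 / 2) * ((∫ x, x ^ 4 ∂μ) - 1) ^ ((1 : ℝ) / 3) := by
  have hx : Integrable (fun x => x) μ := h4.integrable (by norm_num)
  have hg := integrable_sq_sub_one_sq h4
  rw [← integral_sq_sub_one_sq h4 h2]
  set M := ∫ x, (x ^ 2 - 1) ^ 2 ∂μ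
  have hM : 0 ≤ M := integral_nonneg fun x => sq_nonneg _
  refine levyDist_le_of_forall_lt (by positivity) fun ε hε => ?_
  have hε₀ : 0 < ε := lt_of_le_of_lt (by positivity) hε
  -- only `(7 / 2)³ ≥ 2` matters here
  have hMε : M / ε ^ 2 ≤ ε / 2 := by
    have := cube_mul_lt_of_mul_rpow_one_third_lt (by norm_num) hM hε
    rw [div_le_iff₀ (by positivity)]
    nlinarith
  exact levy_condition_bern (by linarith [cdf_neg_one_sub_le hε₀ hg])
    (fun y hy => by linarith [cdf_le_one_half_add_of_lt hε₀ hx h1 hg hy])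
    (by linarith [one_half_sub_le_cdf_neg_one_add hε₀ hx h1 hg])
    (by linarith [one_sub_le_cdf_one_add hε₀ hg])
end

section
/- For every ε ∈ (0,1), the Lévy distance between μ_ε = (ε/2)δ_{-√(1+ε)} + (1/2 - ε)δ_{-1} + (ε/2)δ_{-√(1-ε)} + (ε/2)δ_{√(1-ε)} + (1/2 - ε)δ_{1} + (ε/2)δ_{√(1+ε)} and the Bernoulli distribution b = (1/2)δ_{-1} + (1/2)δ_1 is at least ε/4. -/
open MeasureTheory ProbabilityTheory Set
open scoped ENNReal

/-!
Put `s = √(1 - ε)`. The mass of `μ_ε` on `(-∞, s]` exceeds that on `(s, ∞)` by `ε` (the atoms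
`±√(1 - ε)` both lie in the first), and the total mass is at most `2`, so `cdf μ_ε s ≥ 1/2 + ε/4`.
(For `ε > 1/2` the weights `ENNReal.ofReal (1/2 - ε)` vanish and `μ_ε` has mass `2ε`; Mathlib's `cdf`
normalises a finite measure, which is why only a bound on the mass is needed.) Since `b` has
CDF `1/2` on `[-1, 1)` and `s + ε/2 ≤ 1`, every `δ < ε/4` violates the left Lévy inequality at `s + δ`.
-/

namespace Real

lemma sqrt_one_sub_lt_one {ε : ℝ} (hε : 0 < ε) : √(1 - ε) < 1 :=
  (sqrt_lt' one_pos).2 (by linarith)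

lemma one_lt_sqrt_one_add {ε : ℝ} (hε : 0 < ε) : 1 < √(1 + ε) :=
  (lt_sqrt zero_le_one).2 (by linarith)

lemma neg_sqrt_le_sqrt (x y : ℝ) : -√x ≤ √y :=
  (neg_nonpos.2 (sqrt_nonneg x)).trans (sqrt_nonneg y)

lemma neg_one_le_sqrt (x : ℝ) : -1 ≤ √x :=
  (neg_nonpos.2 zero_le_one).trans (sqrt_nonneg x)

end Real

namespace ProbabilityTheory

open Real

lemma cdf_mul_measureReal_univ (μ : Measure ℝ) [IsFiniteMeasure μ] (x : ℝ) :
    cdf μ x * μ.real univ = μ.real (Iic x) := by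
  have h := lintegral_condCDF ((Measure.dirac Unit.unit).prod μ) x
  rw [lintegral_unique, Measure.fst_univ, ← univ_prod_univ, Measure.prod_prod, Measure.prod_prod,
    measure_univ, one_mul, one_mul] at h
  have h' := congrArg ENNReal.toReal h
  rwa [ENNReal.toReal_mul, ENNReal.toReal_ofReal (condCDF_nonneg _ _ _)] at h'

lemma half_add_le_cdf (μ : Measure ℝ) [IsFiniteMeasure μ] (a : ℝ)
    (hmass : μ.real (Iic a) + μ.real (Ioi a) ≤ 2) (hgap : 0 < μ.real (Iic a) - μ.real (Ioi a)) :
    1 / 2 + (μ.real (Iic a) - μ.real (Ioi a)) / 4 ≤ cdf μ a := by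
  have hcdf := cdf_mul_measureReal_univ μ a
  rw [← measureReal_add_measureReal_compl measurableSet_Iic, compl_Iic] at hcdf
  nlinarith [measureReal_nonneg (μ := μ) (s := Ioi a), measureReal_nonneg (μ := μ) (s := Iic a),
    measureReal_mono (μ := μ) (subset_univ (Ioi a))]

lemma le_levyDist_of_cdf_gap (μ ν : Measure ℝ) (a c : ℝ)
    (hgap : ∀ y < a + c, cdf ν y + c ≤ cdf μ a) : c ≤ levyDist μ ν := by
  refine le_csInf ⟨2, two_pos, fun x => ⟨?_, ?_⟩⟩ ?_
  · linarith [cdf_le_one μ (x - 2), cdf_nonneg ν x]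
  · linarith [cdf_nonneg μ (x + 2), cdf_le_one ν x]
  rintro δ ⟨-, hδ⟩
  by_contra! hδc
  have := (hδ (a + δ)).1
  rw [add_sub_cancel_right] at this
  linarith [hgap (a + δ) (by linarith)]

instance : IsProbabilityMeasure bern :=
  ⟨by simp [bern, ENNReal.inv_two_add_inv_two]⟩

lemma cdf_bern_le_half {y : ℝ} (hy : y < 1) : cdf bern y ≤ 1 / 2 := by
  have h : bern (Iic y) ≤ 2⁻¹ :=
    calc bern (Iic y) = 2⁻¹ * Measure.dirac (-1 : ℝ) (Iic y) := by simp [bern, hy.not_ge]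
      _ ≤ 2⁻¹ := mul_le_of_le_one_right' prob_le_one
  rw [cdf_eq_real, measureReal_def]
  simpa using ENNReal.toReal_mono (by simp) h

noncomputable def muEps (ε : ℝ) : Measure ℝ :=
  ENNReal.ofReal (ε / 2) • Measure.dirac (-Real.sqrt (1 + ε))
    + ENNReal.ofReal (1 / 2 - ε) • Measure.dirac (-1)
    + ENNReal.ofReal (ε / 2) • Measure.dirac (-Real.sqrt (1 - ε))
    + ENNReal.ofReal (ε / 2) • Measure.dirac (Real.sqrt (1 - ε))
    + ENNReal.ofReal (1 / 2 - ε) • Measure.dirac 1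
    + ENNReal.ofReal (ε / 2) • Measure.dirac (Real.sqrt (1 + ε))

instance (ε : ℝ) : IsFiniteMeasure (muEps ε) :=
  ⟨by simp [muEps, ENNReal.add_lt_top]⟩

lemma muEps_real_Iic_sqrt {ε : ℝ} (hε : 0 < ε) :
    (muEps ε).real (Iic (Real.sqrt (1 - ε))) = 3 * (ε / 2) + max (1 / 2 - ε) 0 := by
  simp [muEps, measureReal_def, neg_sqrt_le_sqrt, neg_one_le_sqrt, hε,
    ((sqrt_one_sub_lt_one hε).trans (one_lt_sqrt_one_add hε)).not_ge, ENNReal.toReal_add,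
    ENNReal.toReal_ofReal', max_eq_left (half_pos hε).le]
  ring

lemma muEps_real_Ioi_sqrt {ε : ℝ} (hε : 0 < ε) :
    (muEps ε).real (Ioi (Real.sqrt (1 - ε))) = ε / 2 + max (1 / 2 - ε) 0 := by
  simp [muEps, measureReal_def, neg_sqrt_le_sqrt, neg_one_le_sqrt, sqrt_one_sub_lt_one hε,
    (sqrt_one_sub_lt_one hε).trans (one_lt_sqrt_one_add hε), ENNReal.toReal_add,
    ENNReal.toReal_ofReal', max_eq_left (half_pos hε).le]
  ring

lemma half_add_quarter_le_cdf_muEps {ε : ℝ} (hε₀ : 0 < ε) (hε₁ : ε < 1) :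
    1 / 2 + ε / 4 ≤ cdf (muEps ε) (Real.sqrt (1 - ε)) := by
  have hcdf := half_add_le_cdf (muEps ε) (Real.sqrt (1 - ε))
  rw [muEps_real_Iic_sqrt hε₀, muEps_real_Ioi_sqrt hε₀] at hcdf
  refine le_of_eq_of_le (by ring) (hcdf ?_ (by linarith))
  rcases max_cases (1 / 2 - ε) 0 with ⟨h, -⟩ | ⟨h, -⟩ <;> linarith

end ProbabilityTheory

theorem levy_dist_mu_eps_ge (ε : ℝ) (hε : ε ∈ Ioo (0 : ℝ) 1) (μ : Measure ℝ)
    (hμ : μ = ENNReal.ofReal (ε / 2) • Measure.dirac (-Real.sqrt (1 + ε))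
        + ENNReal.ofReal (1 / 2 - ε) • Measure.dirac (-1)
        + ENNReal.ofReal (ε / 2) • Measure.dirac (-Real.sqrt (1 - ε))
        + ENNReal.ofReal (ε / 2) • Measure.dirac (Real.sqrt (1 - ε))
        + ENNReal.ofReal (1 / 2 - ε) • Measure.dirac 1
        + ENNReal.ofReal (ε / 2) • Measure.dirac (Real.sqrt (1 + ε))) :
    levyDist μ bern ≥ ε / 4 := by
  obtain ⟨hε₀, hε₁⟩ := hε
  have hsqrt : Real.sqrt (1 - ε) ≤ 1 - ε / 2 :=
    Real.sqrt_le_iff.2 ⟨by linarith, by nlinarith⟩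
  refine le_levyDist_of_cdf_gap μ bern (Real.sqrt (1 - ε)) (ε / 4) fun y hy => ?_
  rw [show μ = muEps ε from hμ]
  linarith [cdf_bern_le_half (show y < 1 by linarith), half_add_quarter_le_cdf_muEps hε₀ hε₁]
end

section
/- For every α > 1/3 and every C > 0, there exists a probability measure μ on ℝ with mean 0, variance 1, and finite fourth moment such that L(μ, b) > C·(m_4(μ) - 1)^α, where b = (1/2)δ_{-1} + (1/2)δ_1 and L is the Lévy distance. -/
open MeasureTheory ProbabilityTheory Set
open scoped ENNReal

/-!
Perturb the symmetric Bernoulli law: put mass `δ / 2` at each of `±(1 - δ)` and mass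
`(1 - δ) / 2` at each of `±b`, with `b > 1` fixed by the variance. The fourth moment then exceeds
`1` only by `O(δ³)`, whereas the cdf on `[1 - δ, 1)` equals `1 / 2 + δ / 2` instead of `1 / 2`,
which forces a Lévy distance of at least `δ / 2`. As `δ ^ (3 * α) = o(δ)` for `α > 1 / 3`, a small
`δ` gives the example.
-/

open Filter Topology

section Mixture

variable {α E : Type*} [MeasurableSpace α] [NormedAddCommGroup E] {p : ℝ} {μ ν : Measure α}

noncomputable def mixture (p : ℝ) (μ ν : Measure α) : Measure α :=
  ENNReal.ofReal p • μ + ENNReal.ofReal (1 - p) • ν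

lemma isProbabilityMeasure_mixture [IsProbabilityMeasure μ] [IsProbabilityMeasure ν]
    (hp₀ : 0 ≤ p) (hp₁ : p ≤ 1) : IsProbabilityMeasure (mixture p μ ν) := by
  constructor
  simp only [mixture, Measure.add_apply, Measure.smul_apply, measure_univ, smul_eq_mul,
    mul_one]
  rw [← ENNReal.ofReal_add hp₀ (by linarith)]
  simp

lemma integrable_mixture {f : α → E} (hμ : Integrable f μ) (hν : Integrable f ν) :
    Integrable f (mixture p μ ν) :=
  (hμ.smul_measure ENNReal.ofReal_ne_top).add_measure (hν.smul_measure ENNReal.ofReal_ne_top)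

lemma integral_mixture [NormedSpace ℝ E] {f : α → E} (hμ : Integrable f μ) (hν : Integrable f ν)
    (hp₀ : 0 ≤ p) (hp₁ : p ≤ 1) :
    ∫ x, f x ∂mixture p μ ν = p • ∫ x, f x ∂μ + (1 - p) • ∫ x, f x ∂ν := by
  rw [mixture, integral_add_measure (hμ.smul_measure ENNReal.ofReal_ne_top)
    (hν.smul_measure ENNReal.ofReal_ne_top), integral_smul_measure, integral_smul_measure,
    ENNReal.toReal_ofReal hp₀, ENNReal.toReal_ofReal (by linarith)]

lemma measureReal_mixture_apply [IsFiniteMeasure μ] [IsFiniteMeasure ν] (hp₀ : 0 ≤ p)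
    (hp₁ : p ≤ 1) (s : Set α) : (mixture p μ ν).real s = p * μ.real s + (1 - p) * ν.real s := by
  rw [mixture, measureReal_add_apply (by simp [ENNReal.mul_eq_top]) (by simp [ENNReal.mul_eq_top]),
    measureReal_ennreal_smul_apply, measureReal_ennreal_smul_apply, ENNReal.toReal_ofReal hp₀,
    ENNReal.toReal_ofReal (by linarith)]

end Mixture

lemma cdf_mixture {μ ν : Measure ℝ} [IsProbabilityMeasure μ] [IsProbabilityMeasure ν] {p : ℝ}
    (hp₀ : 0 ≤ p) (hp₁ : p ≤ 1) (t : ℝ) :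
    cdf (mixture p μ ν) t = p * cdf μ t + (1 - p) * cdf ν t := by
  have := isProbabilityMeasure_mixture (μ := μ) (ν := ν) hp₀ hp₁
  simp only [cdf_eq_real, measureReal_mixture_apply hp₀ hp₁]

section SymmTwoPoint

variable {E : Type*} [NormedAddCommGroup E]

noncomputable def symmTwoPoint (a : ℝ) : Measure ℝ :=
  (2 : ℝ≥0∞)⁻¹ • (Measure.dirac (-a) + Measure.dirac a)

lemma bern_eq_symmTwoPoint : bern = symmTwoPoint 1 := by
  rw [bern, symmTwoPoint, smul_add]

instance isProbabilityMeasure_symmTwoPoint (a : ℝ) : IsProbabilityMeasure (symmTwoPoint a) :=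
  ⟨by simp [symmTwoPoint, ENNReal.inv_two_add_inv_two]⟩

lemma integrable_symmTwoPoint (f : ℝ → E) (a : ℝ) : Integrable f (symmTwoPoint a) :=
  ((integrable_dirac (by simp)).add_measure (integrable_dirac (by simp))).smul_measure (by simp)

lemma integral_symmTwoPoint [NormedSpace ℝ E] [CompleteSpace E] (f : ℝ → E) (a : ℝ) :
    ∫ x, f x ∂symmTwoPoint a = (2 : ℝ)⁻¹ • (f (-a) + f a) := by
  rw [symmTwoPoint, integral_smul_measure,
    integral_add_measure (integrable_dirac (by simp)) (integrable_dirac (by simp)),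
    integral_dirac, integral_dirac]
  simp

lemma cdf_symmTwoPoint_of_mem_Ico {a t : ℝ} (ht : t ∈ Ico (-a) a) :
    cdf (symmTwoPoint a) t = 1 / 2 := by
  rw [cdf_eq_real, measureReal_def]
  simp [symmTwoPoint, ht.1, not_le.2 ht.2]

lemma cdf_symmTwoPoint_of_le {a t : ℝ} (ha : 0 ≤ a) (ht : a ≤ t) :
    cdf (symmTwoPoint a) t = 1 := by
  rw [cdf_eq_real, measureReal_def]
  simp [symmTwoPoint, ht, show -a ≤ t by linarith, ENNReal.inv_two_add_inv_two]

end SymmTwoPoint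

lemma le_levyDist {μ ν : Measure ℝ} {d : ℝ}
    (h : ∀ ε, 0 < ε → ε < d → ∃ x, cdf ν x < cdf μ (x - ε) - ε) : d ≤ levyDist μ ν := by
  refine le_csInf ⟨1, one_pos, fun x => ⟨?_, ?_⟩⟩ ?_
  · linarith [cdf_le_one μ (x - 1), cdf_nonneg ν x]
  · linarith [cdf_le_one ν x, cdf_nonneg μ (x + 1)]
  · rintro ε ⟨hε, hcdf⟩
    by_contra! hlt
    obtain ⟨x, hx⟩ := h ε hε hlt
    linarith [(hcdf x).1]

section PerturbedBern

variable {δ : ℝ}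

-- `b` solves `δ (1 - δ)² + (1 - δ) b² = 1`.
noncomputable def perturbedBernAtom (δ : ℝ) : ℝ := √((1 - δ * (1 - δ) ^ 2) / (1 - δ))

noncomputable def perturbedBern (δ : ℝ) : Measure ℝ :=
  mixture δ (symmTwoPoint (1 - δ)) (symmTwoPoint (perturbedBernAtom δ))

lemma perturbedBernAtom_sq (h₁ : δ < 1) :
    perturbedBernAtom δ ^ 2 = (1 - δ * (1 - δ) ^ 2) / (1 - δ) :=
  Real.sq_sqrt (div_nonneg (by nlinarith [sq_nonneg δ]) (by linarith))

lemma one_lt_perturbedBernAtom (h₀ : 0 < δ) (h₁ : δ < 1) : 1 < perturbedBernAtom δ := by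
  rw [perturbedBernAtom, Real.lt_sqrt zero_le_one, lt_div_iff₀ (by linarith)]
  nlinarith [mul_pos (mul_pos h₀ h₀) (show 0 < 2 - δ by linarith)]

lemma isProbabilityMeasure_perturbedBern (h₀ : 0 ≤ δ) (h₁ : δ ≤ 1) :
    IsProbabilityMeasure (perturbedBern δ) :=
  isProbabilityMeasure_mixture h₀ h₁

lemma integral_perturbedBern (f : ℝ → ℝ) (h₀ : 0 ≤ δ) (h₁ : δ ≤ 1) :
    ∫ x, f x ∂perturbedBern δ = δ * ((f (-(1 - δ)) + f (1 - δ)) / 2)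
      + (1 - δ) * ((f (-perturbedBernAtom δ) + f (perturbedBernAtom δ)) / 2) := by
  rw [perturbedBern, integral_mixture (integrable_symmTwoPoint f _) (integrable_symmTwoPoint f _)
    h₀ h₁, integral_symmTwoPoint, integral_symmTwoPoint]
  simp only [smul_eq_mul]
  ring

lemma integral_id_perturbedBern (h₀ : 0 ≤ δ) (h₁ : δ ≤ 1) : ∫ x, x ∂perturbedBern δ = 0 := by
  rw [integral_perturbedBern (fun x => x) h₀ h₁]
  ring

lemma integral_sq_perturbedBern (h₀ : 0 ≤ δ) (h₁ : δ < 1) : ∫ x, x ^ 2 ∂perturbedBern δ = 1 := by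
  rw [integral_perturbedBern (fun x => x ^ 2) h₀ h₁.le, neg_sq, neg_sq, perturbedBernAtom_sq h₁]
  field_simp [show 1 - δ ≠ 0 by linarith]
  ring

lemma integral_pow_four_perturbedBern (h₀ : 0 ≤ δ) (h₁ : δ < 1) :
    ∫ x, x ^ 4 ∂perturbedBern δ = 1 + δ ^ 3 * (2 - δ) ^ 2 / (1 - δ) := by
  have h4 : perturbedBernAtom δ ^ 4 = (perturbedBernAtom δ ^ 2) ^ 2 := by ring
  rw [integral_perturbedBern (fun x => x ^ 4) h₀ h₁.le, Even.neg_pow (by decide),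
    Even.neg_pow (by decide), h4, perturbedBernAtom_sq h₁]
  field_simp [show 1 - δ ≠ 0 by linarith]
  ring

lemma integral_pow_four_perturbedBern_sub_one_mem_Icc (h₀ : 0 ≤ δ) (h : δ ≤ 1 / 2) :
    ∫ x, x ^ 4 ∂perturbedBern δ - 1 ∈ Icc 0 (8 * δ ^ 3) := by
  rw [integral_pow_four_perturbedBern h₀ (by linarith), add_sub_cancel_left]
  constructor
  · have : 0 < 1 - δ := by linarith
    positivity
  · rw [div_le_iff₀ (by linarith)]
    nlinarith [pow_nonneg h₀ 3]

lemma memLp_id_perturbedBern {p : ℝ≥0∞} (hp₀ : p ≠ 0) (hp : p ≠ ∞) :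
    MemLp (fun x => x) p (perturbedBern δ) :=
  (integrable_norm_rpow_iff aestronglyMeasurable_id hp₀ hp).1 <|
    integrable_mixture (integrable_symmTwoPoint _ _) (integrable_symmTwoPoint _ _)

lemma half_le_levyDist_perturbedBern (h₀ : 0 < δ) (h₁ : δ < 1) :
    δ / 2 ≤ levyDist (perturbedBern δ) bern := by
  refine le_levyDist fun ε hε hεδ => ⟨1 - ε, ?_⟩
  have hb := one_lt_perturbedBernAtom h₀ h₁
  rw [bern_eq_symmTwoPoint, cdf_symmTwoPoint_of_mem_Ico ⟨by linarith, by linarith⟩, perturbedBern,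
    cdf_mixture h₀.le h₁.le, cdf_symmTwoPoint_of_le (by linarith) (by linarith),
    cdf_symmTwoPoint_of_mem_Ico ⟨by linarith, by linarith⟩]
  linarith

end PerturbedBern

lemma eventually_mul_rpow_lt_mul {p : ℝ} (hp : 1 < p) (c : ℝ) {k : ℝ} (hk : 0 < k) :
    ∀ᶠ δ in 𝓝[>] 0, c * δ ^ p < k * δ := by
  have hlim : Tendsto (fun δ : ℝ => c * δ ^ (p - 1)) (𝓝 0) (𝓝 0) := by
    simpa [Real.zero_rpow (show p - 1 ≠ 0 by linarith)] using
      ((Real.continuousAt_rpow_const 0 (p - 1) (Or.inr (by linarith))).tendsto.const_mul c)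
  filter_upwards [self_mem_nhdsWithin,
    nhdsWithin_le_nhds (hlim.eventually (gt_mem_nhds hk))] with δ (hδ : 0 < δ) hsmall
  calc c * δ ^ p = c * δ ^ (p - 1) * δ := by
        rw [mul_assoc, ← Real.rpow_add_one hδ.ne', sub_add_cancel]
    _ < k * δ := mul_lt_mul_of_pos_right hsmall hδ

theorem cube_root_exponent_sharp (α C : ℝ) (hα : 1 / 3 < α) (hC : 0 < C) :
    ∃ μ : Measure ℝ, IsProbabilityMeasure μ ∧
      MemLp (fun x => x) 4 μ ∧
      (∫ x, x ∂μ) = 0 ∧ (∫ x, x ^ 2 ∂μ) = 1 ∧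
      levyDist μ bern > C * ((∫ x, x ^ 4 ∂μ) - 1) ^ α := by
  obtain ⟨δ, hsmall, hδ₀, hδ⟩ := ((eventually_mul_rpow_lt_mul (by linarith : 1 < 3 * α)
    (C * 8 ^ α) (by norm_num : (0 : ℝ) < 1 / 2)).and
    (Ioc_mem_nhdsGT (by norm_num : (0 : ℝ) < 1 / 2))).exists
  obtain ⟨hm₀, hm₈⟩ := integral_pow_four_perturbedBern_sub_one_mem_Icc hδ₀.le hδ
  refine ⟨perturbedBern δ, isProbabilityMeasure_perturbedBern hδ₀.le (by linarith),
    memLp_id_perturbedBern (by norm_num) (by norm_num), integral_id_perturbedBern hδ₀.le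
    (by linarith), integral_sq_perturbedBern hδ₀.le (by linarith), ?_⟩
  calc C * (∫ x, x ^ 4 ∂perturbedBern δ - 1) ^ α ≤ C * (8 * δ ^ 3) ^ α := by gcongr
    _ = C * 8 ^ α * δ ^ (3 * α) := by
      rw [Real.mul_rpow (by norm_num) (by positivity), ← Real.rpow_natCast_mul hδ₀.le]
      push_cast
      ring
    _ < 1 / 2 * δ := hsmall
    _ ≤ levyDist (perturbedBern δ) bern := by
      linarith [half_le_levyDist_perturbedBern hδ₀ (by linarith)]
end

section
/- For n a positive integer, let μ_n = p_n δ_{x_n} + q_n δ_{y_n} with p_n = (√(1+4n)+1)/(2√(1+4n)), q_n = (√(1+4n)-1)/(2√(1+4n)), x_n = (1-√(1+4n))/√(4n), y_n = (1+√(1+4n))/√(4n). Then the Lévy distance between μ_n and b = (1/2)δ_{-1} + (1/2)δ_1 is at least 1/(6√n). -/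
/-!
An admissible `ε` for `L(μ, ν)` satisfies `F_μ(a) - ε ≤ F_ν(a + ε)` at every point `a`; since `F_ν`
is monotone, either `ε ≥ δ` or `ε ≥ F_μ(a) - F_ν(a + δ)`. For `μ = μ_n`, `ν = b`, `a = x_n` and
`δ = -x_n` this gives `L(μ_n, b) ≥ min(-x_n, p_n - 1/2)`, and both terms are at least `1/(6√n)`:
`p_n - 1/2 = 1/(2√(1+4n))` and `-x_n = (√(1+4n) - 1)/(2√n)`.
-/

open MeasureTheory ProbabilityTheory Set
open scoped ENNReal

lemma two_mem_levyDist_set (μ ν : Measure ℝ) :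
    2 ∈ {ε : ℝ | 0 < ε ∧ ∀ x : ℝ,
      cdf μ (x - ε) - ε ≤ cdf ν x ∧ cdf ν x ≤ cdf μ (x + ε) + ε} :=
  ⟨two_pos, fun x => ⟨by linarith [cdf_le_one μ (x - 2), cdf_nonneg ν x],
    by linarith [cdf_le_one ν x, cdf_nonneg μ (x + 2)]⟩⟩

lemma min_sub_cdf_le_levyDist (μ ν : Measure ℝ) (a δ : ℝ) :
    min δ (cdf μ a - cdf ν (a + δ)) ≤ levyDist μ ν := by
  refine le_csInf ⟨2, two_mem_levyDist_set μ ν⟩ ?_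
  rintro ε ⟨-, hε⟩
  rcases le_or_gt δ ε with hδε | hεδ
  · exact (min_le_left _ _).trans hδε
  · have hcdf := (hε (a + ε)).1
    rw [add_sub_cancel_right] at hcdf
    have hmono := (cdf ν).mono (by linarith : a + ε ≤ a + δ)
    exact (min_le_right _ _).trans (by linarith)

lemma cdf_smul_dirac_add_smul_dirac {a b : ℝ≥0∞} (hab : a + b = 1) {x y z : ℝ}
    (hxz : x ≤ z) (hzy : z < y) :
    cdf (a • Measure.dirac x + b • Measure.dirac y) z = a.toReal := by
  have : IsProbabilityMeasure (a • Measure.dirac x + b • Measure.dirac y) := ⟨by simp [hab]⟩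
  rw [cdf_eq_real, measureReal_def]
  simp [Measure.dirac_apply' _ measurableSet_Iic, hxz, hzy.not_ge]

lemma cdf_bern_of_mem_Ico {z : ℝ} (hz : z ∈ Ico (-1) 1) : cdf bern z = 1 / 2 := by
  rw [bern.eq_1, cdf_smul_dirac_add_smul_dirac ENNReal.inv_two_add_inv_two hz.1 hz.2]
  simp [ENNReal.toReal_inv]

section

variable {m : ℝ}

lemma two_le_sqrt_one_add_four_mul (hm : 1 ≤ m) : 2 ≤ √(1 + 4 * m) :=
  Real.le_sqrt_of_sq_le (by linarith)

lemma one_div_six_sqrt_le_weight_sub_half (hm : 1 ≤ m) :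
    1 / (6 * √m) ≤ (√(1 + 4 * m) + 1) / (2 * √(1 + 4 * m)) - 1 / 2 := by
  have hs := two_le_sqrt_one_add_four_mul hm
  have hsq : √(1 + 4 * m) ^ 2 = 1 + 4 * m := Real.sq_sqrt (by linarith)
  have hm' : √m ^ 2 = m := Real.sq_sqrt (by linarith)
  have hsm : √(1 + 4 * m) ≤ 3 * √m := by nlinarith [Real.sqrt_nonneg m]
  calc 1 / (6 * √m) ≤ 1 / (2 * √(1 + 4 * m)) :=
        one_div_le_one_div_of_le (by positivity) (by linarith)
    _ = _ := by field_simp; ring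

lemma one_div_six_sqrt_le_neg_atom (hm : 1 ≤ m) :
    1 / (6 * √m) ≤ -((1 - √(1 + 4 * m)) / √(4 * m)) := by
  have hs := two_le_sqrt_one_add_four_mul hm
  have hm0 : 0 < √m := Real.sqrt_pos.mpr (by linarith)
  have ht : √(4 * m) = 2 * √m := by
    rw [Real.sqrt_mul (by norm_num), show (4 : ℝ) = 2 ^ 2 by norm_num, Real.sqrt_sq two_pos.le]
  rw [ht, ← neg_div, neg_sub, div_le_div_iff₀ (by positivity) (by positivity)]
  nlinarith

end

theorem levy_dist_two_point_measure_ge (n : ℕ) (hn : 0 < n) (μ : Measure ℝ)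
    (hμ : μ = ENNReal.ofReal ((Real.sqrt (1 + 4 * n) + 1) / (2 * Real.sqrt (1 + 4 * n))) •
          Measure.dirac ((1 - Real.sqrt (1 + 4 * n)) / Real.sqrt (4 * n))
        + ENNReal.ofReal ((Real.sqrt (1 + 4 * n) - 1) / (2 * Real.sqrt (1 + 4 * n))) •
          Measure.dirac ((1 + Real.sqrt (1 + 4 * n)) / Real.sqrt (4 * n))) :
    levyDist μ bern ≥ 1 / (6 * Real.sqrt n) := by
  set s := √(1 + 4 * (n : ℝ))
  set t := √(4 * (n : ℝ))
  have hm : (1 : ℝ) ≤ n := by exact_mod_cast hn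
  have hs : 2 ≤ s := two_le_sqrt_one_add_four_mul hm
  have hweights : ENNReal.ofReal ((s + 1) / (2 * s)) + ENNReal.ofReal ((s - 1) / (2 * s)) = 1 := by
    rw [← ENNReal.ofReal_add (by positivity) (div_nonneg (by linarith) (by positivity)),
      ← add_div, show s + 1 + (s - 1) = 2 * s by ring, div_self (by positivity), ENNReal.ofReal_one]
  have hatoms : (1 - s) / t < (1 + s) / t :=
    div_lt_div_of_pos_right (by linarith) (Real.sqrt_pos.mpr (by linarith))
  calc 1 / (6 * √n) ≤ min (-((1 - s) / t)) ((s + 1) / (2 * s) - 1 / 2) :=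
        le_min (one_div_six_sqrt_le_neg_atom hm) (one_div_six_sqrt_le_weight_sub_half hm)
    _ = min (-((1 - s) / t)) (cdf μ ((1 - s) / t) - cdf bern ((1 - s) / t + -((1 - s) / t))) := by
        rw [hμ, cdf_smul_dirac_add_smul_dirac hweights le_rfl hatoms,
          ENNReal.toReal_ofReal (by positivity), add_neg_cancel, cdf_bern_of_mem_Ico (by norm_num)]
    _ ≤ levyDist μ bern := min_sub_cdf_le_levyDist μ bern _ _
end

section
/- Let μ be a probability measure on ℝ with mean 0 and variance 1, supported in [-K,K], such that μ = p δ_{x₁} + q δ_{x₂} + ρ, where x₁ ∈ [-1-δ, -1+δ], x₂ ∈ [1-δ, 1+δ], the measure ρ is supported in [-δ, δ], δ = K/√n < 1, p = μ({x₁}), q = μ({x₂}), r = ρ(ℝ), and p + q + r = 1. Then |q - p| ≤ δ, p ≤ 1/2 + δ/2, q ≤ 1/2 + δ/2, p ≥ 1/2 - 2δ, q ≥ 1/2 - 2δ, and r ≤ 4δ. -/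
open MeasureTheory Set
open scoped ENNReal

theorem atom_masses_concentrate (μ ρ : Measure ℝ) [IsProbabilityMeasure μ]
    (K δ : ℝ) (n : ℕ) (p q r x₁ x₂ : ℝ)
    (hδ : δ = K / Real.sqrt n) (hδ0 : 0 < δ) (hδ1 : δ < 1)
    (hsupp : μ (Icc (-K) K)ᶜ = 0)
    (hi1 : Integrable (fun x => x) μ) (hi2 : Integrable (fun x => x ^ 2) μ)
    (h1 : ∫ x, x ∂μ = 0) (h2 : ∫ x, x ^ 2 ∂μ = 1)
    (hx1 : x₁ ∈ Icc (-1 - δ) (-1 + δ)) (hx2 : x₂ ∈ Icc (1 - δ) (1 + δ))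
    (hρ : ρ (Icc (-δ) δ)ᶜ = 0)
    (hdecomp : μ = ENNReal.ofReal p • Measure.dirac x₁
        + ENNReal.ofReal q • Measure.dirac x₂ + ρ)
    (hp0 : 0 ≤ p) (hq0 : 0 ≤ q)
    (hp : ENNReal.ofReal p = μ {x₁}) (hq : ENNReal.ofReal q = μ {x₂})
    (hr : r = (ρ univ).toReal) (hsum : p + q + r = 1) :
    |q - p| ≤ δ ∧ p ≤ 1 / 2 + δ / 2 ∧ q ≤ 1 / 2 + δ / 2 ∧
      p ≥ 1 / 2 - 2 * δ ∧ q ≥ 1 / 2 - 2 * δ ∧ r ≤ 4 * δ := by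
  obtain ⟨hx1l, hx1u⟩ := hx1
  obtain ⟨hx2l, hx2u⟩ := hx2
  set A : Measure ℝ := ENNReal.ofReal p • Measure.dirac x₁ with hA
  set B : Measure ℝ := ENNReal.ofReal q • Measure.dirac x₂ with hB
  have hρle : ρ ≤ μ := by rw [hdecomp]; exact Measure.le_add_left le_rfl
  have hABle : A + B ≤ μ := by rw [hdecomp]; exact Measure.le_add_right le_rfl
  have hAle : A ≤ μ := le_trans (Measure.le_add_right le_rfl) hABle
  have hBle : B ≤ μ := le_trans (Measure.le_add_left le_rfl) hABle
  haveI : IsFiniteMeasure ρ := isFiniteMeasure_of_le μ hρle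
  have hr0 : 0 ≤ r := hr ▸ ENNReal.toReal_nonneg
  have hmem : ∀ᵐ x ∂ρ, x ∈ Icc (-δ) δ := by
    rw [ae_iff]
    exact hρ
  have hI1 : |∫ x, x ∂ρ| ≤ δ * r := by
    have h := norm_integral_le_of_norm_le_const (μ := ρ) (f := fun x => x) (C := δ)
      (hmem.mono fun x hx => by
        rw [Real.norm_eq_abs]; exact abs_le.mpr ⟨hx.1, hx.2⟩)
    rw [Real.norm_eq_abs] at h
    rw [hr]
    exact h
  have hI2b : ∫ x, x ^ 2 ∂ρ ≤ δ ^ 2 * r := by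
    have h := norm_integral_le_of_norm_le_const (μ := ρ) (f := fun x => x ^ 2) (C := δ ^ 2)
      (hmem.mono fun x hx => by
        rw [Real.norm_eq_abs, abs_of_nonneg (sq_nonneg x)]
        exact sq_le_sq' hx.1 hx.2)
    rw [Real.norm_eq_abs] at h
    rw [hr]
    exact le_trans (le_abs_self _) h
  have hI2a : 0 ≤ ∫ x, x ^ 2 ∂ρ := integral_nonneg fun x => sq_nonneg x
  have e1 : p * x₁ + q * x₂ + ∫ x, x ∂ρ = 0 := by
    rw [hdecomp, integral_add_measure (hi1.mono_measure hABle) (hi1.mono_measure hρle),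
      integral_add_measure (hi1.mono_measure hAle) (hi1.mono_measure hBle),
      hA, hB, integral_smul_measure, integral_smul_measure, integral_dirac, integral_dirac,
      ENNReal.toReal_ofReal hp0, ENNReal.toReal_ofReal hq0] at h1
    simpa using h1
  have e2 : p * x₁ ^ 2 + q * x₂ ^ 2 + ∫ x, x ^ 2 ∂ρ = 1 := by
    rw [hdecomp, integral_add_measure (hi2.mono_measure hABle) (hi2.mono_measure hρle),
      integral_add_measure (hi2.mono_measure hAle) (hi2.mono_measure hBle),
      hA, hB, integral_smul_measure, integral_smul_measure, integral_dirac, integral_dirac,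
      ENNReal.toReal_ofReal hp0, ENNReal.toReal_ofReal hq0] at h2
    simpa using h2
  obtain ⟨hI1l, hI1u⟩ := abs_le.mp hI1
  have hqp : q - p ≤ δ := by
    nlinarith [mul_nonneg hp0 (by linarith : (0:ℝ) ≤ x₁ + 1 + δ),
      mul_nonneg hq0 (by linarith : (0:ℝ) ≤ 1 + δ - x₂)]
  have hpq : p - q ≤ δ := by
    nlinarith [mul_nonneg hp0 (by linarith : (0:ℝ) ≤ -1 + δ - x₁),
      mul_nonneg hq0 (by linarith : (0:ℝ) ≤ x₂ - 1 + δ)]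
  have hr2 : r ≤ 2 * δ := by
    nlinarith [mul_nonneg hp0 (mul_nonneg (by linarith : (0:ℝ) ≤ 1 + δ - x₁)
        (by linarith : (0:ℝ) ≤ 1 + δ + x₁)),
      mul_nonneg hq0 (mul_nonneg (by linarith : (0:ℝ) ≤ 1 + δ - x₂)
        (by linarith : (0:ℝ) ≤ 1 + δ + x₂)),
      sq_nonneg δ, mul_pos hδ0 hδ0]
  refine ⟨abs_le.mpr ⟨by linarith, hqp⟩, by linarith, by linarith, by linarith, by linarith,
    by linarith⟩
end

section
/- Let μ be a probability measure on ℝ with mean 0 and variance 1, and suppose μ((-1-ε,-1+ε) ∪ (1-ε,1+ε)) ≥ 1-ε for ε ∈ (0,1). Write p₁ = μ((-∞,-1-ε]), p₂ = μ((-1-ε,-1+ε)), p₃ = μ([-1+ε,1-ε]), p₄ = μ((1-ε,1+ε)), p₅ = μ([1+ε,∞)). Then |p₂ - p₄| < 5ε and 1/2 - 3ε < p₂, p₄ < 1/2 + (5/2)ε. -/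
/-!
Split ℝ into `A = (-1-ε, -1+ε)`, `B = (1-ε, 1+ε)` and the rest `R`. Since `x² ≥ (1-ε)²` on
`A ∪ B`, which carries mass at least `1-ε`, the second moment left to `R` is at most `3ε`; with
`2|x| ≤ 1 + x²` and `μ R ≤ ε` this makes the mean contributed by `R` at most `2ε` in absolute
value. The means contributed by `A` and `B` are `-μ A` and `μ B` up to `ε μ A` and `ε μ B`, and the
three contributions add up to `0`, so `|μ A - μ B| ≤ 3ε`. Together with
`1 - ε ≤ μ A + μ B ≤ 1` this pins both masses near `1/2`.
-/

open MeasureTheory Set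

namespace MeasureTheory

variable {μ : Measure ℝ}

theorem two_mul_abs_setIntegral_id_le [IsFiniteMeasure μ] (hi1 : Integrable (fun x => x) μ)
    (hi2 : Integrable (fun x => x ^ 2) μ) (s : Set ℝ) :
    2 * |∫ x in s, x ∂μ| ≤ μ.real s + ∫ x in s, x ^ 2 ∂μ := by
  have hone : IntegrableOn (fun _ => (1 : ℝ)) s μ := integrableOn_const
  calc 2 * |∫ x in s, x ∂μ| ≤ 2 * ∫ x in s, |x| ∂μ := by
        gcongr; exact abs_integral_le_integral_abs
    _ = ∫ x in s, 2 * |x| ∂μ := (integral_const_mul 2 _).symm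
    _ ≤ ∫ x in s, (1 + x ^ 2) ∂μ := by
        refine setIntegral_mono (hi1.integrableOn.abs.const_mul 2)
          (hone.add hi2.integrableOn) fun x => ?_
        linarith [two_mul_le_add_sq |x| 1, sq_abs x]
    _ = μ.real s + ∫ x in s, x ^ 2 ∂μ := by
        rw [integral_add hone hi2.integrableOn, setIntegral_const, smul_eq_mul, mul_one]

theorem abs_setIntegral_id_sub_le {s : Set ℝ} {a ε : ℝ} (hμs : μ s < ⊤)
    (hi : IntegrableOn (fun x => x) s μ) (h : ∀ x ∈ s, |x - a| ≤ ε) :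
    |∫ x in s, x ∂μ - a * μ.real s| ≤ ε * μ.real s := by
  have hsub : ∫ x in s, (x - a) ∂μ = ∫ x in s, x ∂μ - a * μ.real s := by
    rw [integral_sub hi (integrableOn_const hμs.ne), setIntegral_const, smul_eq_mul, mul_comm]
  rw [← hsub]
  exact norm_setIntegral_le_of_norm_le_const (f := fun x => x - a) hμs h

theorem abs_setIntegral_id_compl_le [IsProbabilityMeasure μ] (hi1 : Integrable (fun x => x) μ)
    (hi2 : Integrable (fun x => x ^ 2) μ) (h2 : ∫ x, x ^ 2 ∂μ = 1) {s : Set ℝ} {ε : ℝ} (hε : ε ≤ 1)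
    (hs : MeasurableSet s) (hmass : 1 - ε ≤ μ.real s) (hsq : ∀ x ∈ s, (1 - ε) ^ 2 ≤ x ^ 2) :
    |∫ x in sᶜ, x ∂μ| ≤ 2 * ε := by
  have hcompl : μ.real sᶜ ≤ ε := by rw [probReal_compl_eq_one_sub hs]; linarith
  have hsq_s : (1 - ε) ^ 2 * μ.real s ≤ ∫ x in s, x ^ 2 ∂μ :=
    setIntegral_ge_of_const_le_real hs (measure_ne_top μ s) hsq hi2.integrableOn
  have hcube : (1 - ε) ^ 2 * (1 - ε) ≤ (1 - ε) ^ 2 * μ.real s :=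
    mul_le_mul_of_nonneg_left hmass (sq_nonneg _)
  have hsq_compl : ∫ x in sᶜ, x ^ 2 ∂μ ≤ 3 * ε := by
    have := integral_add_compl hs hi2
    nlinarith [sq_nonneg ε]
  linarith [two_mul_abs_setIntegral_id_le hi1 hi2 sᶜ]

theorem abs_measureReal_sub_le [IsFiniteMeasure μ] {A B : Set ℝ} {ε δ : ℝ}
    (hi1 : Integrable (fun x => x) μ) (h1 : ∫ x, x ∂μ = 0) (hAB : Disjoint A B)
    (hA : MeasurableSet A) (hB : MeasurableSet B)
    (hnearA : ∀ x ∈ A, |x - -1| ≤ ε) (hnearB : ∀ x ∈ B, |x - 1| ≤ ε)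
    (htail : |∫ x in (A ∪ B)ᶜ, x ∂μ| ≤ δ) :
    |μ.real A - μ.real B| ≤ δ + ε * (μ.real A + μ.real B) := by
  have hsplit : ∫ x in A, x ∂μ + ∫ x in B, x ∂μ + ∫ x in (A ∪ B)ᶜ, x ∂μ = 0 := by
    rw [← setIntegral_union hAB hB hi1.integrableOn hi1.integrableOn,
      integral_add_compl (hA.union hB) hi1, h1]
  have hmeanA := abs_setIntegral_id_sub_le (measure_lt_top μ A) hi1.integrableOn hnearA
  have hmeanB := abs_setIntegral_id_sub_le (measure_lt_top μ B) hi1.integrableOn hnearB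
  rw [abs_le] at hmeanA hmeanB htail ⊢
  constructor <;> linarith

end MeasureTheory

theorem region_masses_estimate (μ : Measure ℝ) [IsProbabilityMeasure μ]
    (hi1 : Integrable (fun x => x) μ) (hi2 : Integrable (fun x => x ^ 2) μ)
    (h1 : ∫ x, x ∂μ = 0) (h2 : ∫ x, x ^ 2 ∂μ = 1)
    (ε : ℝ) (hε : ε ∈ Ioo (0 : ℝ) 1)
    (hconc : (μ (Ioo (-1 - ε) (-1 + ε) ∪ Ioo (1 - ε) (1 + ε))).toReal ≥ 1 - ε) :
    |(μ (Ioo (-1 - ε) (-1 + ε))).toReal - (μ (Ioo (1 - ε) (1 + ε))).toReal| < 5 * ε ∧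
    1 / 2 - 3 * ε < (μ (Ioo (-1 - ε) (-1 + ε))).toReal ∧
    (μ (Ioo (-1 - ε) (-1 + ε))).toReal < 1 / 2 + (5 / 2) * ε ∧
    1 / 2 - 3 * ε < (μ (Ioo (1 - ε) (1 + ε))).toReal ∧
    (μ (Ioo (1 - ε) (1 + ε))).toReal < 1 / 2 + (5 / 2) * ε := by
  obtain ⟨hε0, hε1⟩ := hε
  simp only [← measureReal_def] at hconc ⊢
  set A := Ioo (-1 - ε) (-1 + ε)
  set B := Ioo (1 - ε) (1 + ε)
  have hAB : Disjoint A B := disjoint_left.mpr fun x hxA hxB => by linarith [hxA.2, hxB.1]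
  have hmass : μ.real (A ∪ B) = μ.real A + μ.real B := measureReal_union hAB measurableSet_Ioo
  have htail : |∫ x in (A ∪ B)ᶜ, x ∂μ| ≤ 2 * ε :=
    abs_setIntegral_id_compl_le hi1 hi2 h2 hε1.le (measurableSet_Ioo.union measurableSet_Ioo)
      hconc fun x hx => by rcases hx with ⟨hx₁, hx₂⟩ | ⟨hx₁, hx₂⟩ <;> nlinarith
  have hle_one : μ.real A + μ.real B ≤ 1 := hmass ▸ measureReal_le_one
  have hdiff : |μ.real A - μ.real B| ≤ 3 * ε := by
    have := abs_measureReal_sub_le (ε := ε) hi1 h1 hAB measurableSet_Ioo measurableSet_Ioo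
      (fun x hx => abs_le.mpr ⟨by linarith [hx.1], by linarith [hx.2]⟩)
      (fun x hx => abs_le.mpr ⟨by linarith [hx.1], by linarith [hx.2]⟩) htail
    linarith [mul_le_mul_of_nonneg_left hle_one hε0.le]
  rw [abs_le] at hdiff
  refine ⟨abs_lt.mpr ⟨by linarith, by linarith⟩, ?_, ?_, ?_, ?_⟩ <;> linarith
end

section
/- Let μ be a probability measure on ℝ with mean 0 and variance 1, and ε ∈ (0,1) with μ((-1-ε,-1+ε) ∪ (1-ε,1+ε)) ≥ 1-ε. Then ∫_{(-∞,-1-ε]} |t| dμ(t) + ∫_{[1+ε,∞)} |t| dμ(t) < 3ε. -/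
/-!
On the tails `|t| ≥ 1 + ε` we have `|t| ≤ t²`, so the tail integral of `|t|` is at most the second
moment carried by the tails. The tails are disjoint from the concentration set `S`, on which
`t² ≥ (1 - ε)²`; since `μ S ≥ 1 - ε`, the set `S` already carries second moment at least
`(1 - ε)³`. Hence the tails carry at most `1 - (1 - ε)³ = 3ε - 3ε² + ε³ < 3ε`.
-/

open MeasureTheory Set

lemma abs_le_sq_of_one_le_abs {t : ℝ} (ht : 1 ≤ |t|) : |t| ≤ t ^ 2 := by
  simpa only [sq_abs] using le_self_pow₀ ht two_ne_zero

lemma setIntegral_abs_le_setIntegral_sq {μ : Measure ℝ} {s : Set ℝ} (hs : MeasurableSet s)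
    (h : ∀ t ∈ s, 1 ≤ |t|) (hf : IntegrableOn (fun t => t ^ 2) s μ) :
    ∫ t in s, |t| ∂μ ≤ ∫ t in s, t ^ 2 ∂μ :=
  integral_mono_of_nonneg (.of_forall fun t => abs_nonneg t) hf
    ((ae_restrict_iff' hs).2 (.of_forall fun t ht => abs_le_sq_of_one_le_abs (h t ht)))

lemma setIntegral_add_setIntegral_le_integral {α : Type*} [MeasurableSpace α] {μ : Measure α}
    {f : α → ℝ} {s t : Set α} (hst : Disjoint s t) (ht : MeasurableSet t) (hf : Integrable f μ)
    (hf0 : 0 ≤ f) : ∫ x in s, f x ∂μ + ∫ x in t, f x ∂μ ≤ ∫ x, f x ∂μ := by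
  rw [← setIntegral_union hst ht hf.integrableOn hf.integrableOn]
  exact setIntegral_le_integral hf (.of_forall hf0)

lemma one_sub_sq_le_sq_of_mem_Ioo_union_Ioo {ε t : ℝ} (hε : ε ≤ 1)
    (ht : t ∈ Ioo (-1 - ε) (-1 + ε) ∪ Ioo (1 - ε) (1 + ε)) : (1 - ε) ^ 2 ≤ t ^ 2 := by
  have h : 1 - ε ≤ |t| := by
    rcases ht with ⟨-, ht⟩ | ⟨ht, -⟩
    · linarith [neg_le_abs t]
    · exact ht.le.trans (le_abs_self t)
  simpa only [sq_abs] using pow_le_pow_left₀ (by linarith) h 2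

theorem tail_abs_integral_lt_general (μ : Measure ℝ) [IsProbabilityMeasure μ]
    (hi2 : Integrable (fun x => x ^ 2) μ)
    (h2 : ∫ x, x ^ 2 ∂μ = 1)
    (ε : ℝ) (hε : ε ∈ Ioo (0 : ℝ) 1)
    (hconc : (μ (Ioo (-1 - ε) (-1 + ε) ∪ Ioo (1 - ε) (1 + ε))).toReal ≥ 1 - ε) :
    (∫ t in Iic (-1 - ε), |t| ∂μ) + (∫ t in Ici (1 + ε), |t| ∂μ) < 3 * ε := by
  obtain ⟨hε0, hε1⟩ := hε
  set S := Ioo (-1 - ε) (-1 + ε) ∪ Ioo (1 - ε) (1 + ε)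
  have hS : MeasurableSet S := measurableSet_Ioo.union measurableSet_Ioo
  have hleft : ∫ t in Iic (-1 - ε), |t| ∂μ ≤ ∫ t in Iic (-1 - ε), t ^ 2 ∂μ :=
    setIntegral_abs_le_setIntegral_sq measurableSet_Iic
      (fun t ht => by linarith [mem_Iic.1 ht, neg_le_abs t]) hi2.integrableOn
  have hright : ∫ t in Ici (1 + ε), |t| ∂μ ≤ ∫ t in Ici (1 + ε), t ^ 2 ∂μ :=
    setIntegral_abs_le_setIntegral_sq measurableSet_Ici
      (fun t ht => by linarith [mem_Ici.1 ht, le_abs_self t]) hi2.integrableOn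
  have hdisj : Disjoint (Iic (-1 - ε) ∪ Ici (1 + ε)) S := by
    rw [disjoint_left]
    rintro t (ht | ht) (⟨h, h'⟩ | ⟨h, h'⟩) <;> simp only [mem_Iic, mem_Ici] at ht <;> linarith
  have hcore : (1 - ε) ^ 2 * (1 - ε) ≤ ∫ t in S, t ^ 2 ∂μ :=
    (mul_le_mul_of_nonneg_left hconc (sq_nonneg _)).trans <|
      setIntegral_ge_of_const_le_real hS (measure_ne_top μ S)
        (fun t ht => one_sub_sq_le_sq_of_mem_Ioo_union_Ioo hε1.le ht) hi2.integrableOn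
  calc (∫ t in Iic (-1 - ε), |t| ∂μ) + (∫ t in Ici (1 + ε), |t| ∂μ)
      ≤ ∫ t in Iic (-1 - ε), t ^ 2 ∂μ + ∫ t in Ici (1 + ε), t ^ 2 ∂μ := add_le_add hleft hright
    _ = ∫ t in Iic (-1 - ε) ∪ Ici (1 + ε), t ^ 2 ∂μ :=
      (setIntegral_union (Iic_disjoint_Ici.2 (by linarith)) measurableSet_Ici
        hi2.integrableOn hi2.integrableOn).symm
    _ ≤ 1 - (1 - ε) ^ 2 * (1 - ε) := by
      linarith [setIntegral_add_setIntegral_le_integral hdisj hS hi2 fun t => sq_nonneg t]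
    _ < 3 * ε := by nlinarith [mul_pos (mul_pos hε0 hε0) (show (0 : ℝ) < 3 - ε by linarith)]

theorem tail_abs_integral_lt (μ : Measure ℝ) [IsProbabilityMeasure μ]
    (hi1 : Integrable (fun x => x) μ) (hi2 : Integrable (fun x => x ^ 2) μ)
    (h1 : ∫ x, x ∂μ = 0) (h2 : ∫ x, x ^ 2 ∂μ = 1)
    (ε : ℝ) (hε : ε ∈ Ioo (0 : ℝ) 1)
    (hconc : (μ (Ioo (-1 - ε) (-1 + ε) ∪ Ioo (1 - ε) (1 + ε))).toReal ≥ 1 - ε) :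
    (∫ t in Iic (-1 - ε), |t| ∂μ) + (∫ t in Ici (1 + ε), |t| ∂μ) < 3 * ε :=
  tail_abs_integral_lt_general μ hi2 h2 ε hε hconc
end
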